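/- For each of the stress spaces S¹_□, S²_□, S³_□ on the reference square (−1,1)² defined in the Hu-Washizu formulation, the 'C-compatible' subspace S^c = {τ ∈ S_□ : C τ ∈ S_□} (where C is a linear elasticity tensor with Lamé coefficients (λ, μ), λ ≠ 0) consists only of matrix fields with constant trace; i.e. if τ ∈ S_□ and C τ ∈ S_□ then tr(τ) is a constant function on (−1,1)². -/

import Mathlib

open Matrix

/-- Action of the linear elasticity tensor with Lamé coefficients `(lam, mu)`
on a `2 × 2` matrix. -/
noncomputable def elasTensor (lam mu : ℝ) (τ : Matrix (Fin 2) (Fin 2) ℝ) :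
    Matrix (Fin 2) (Fin 2) ℝ :=
  (lam * Matrix.trace τ) • (1 : Matrix (Fin 2) (Fin 2) ℝ) + (2 * mu) • τ

/-- Membership in the stress space `S¹_□`: entry (1,1) ∈ span{1, ŷ},
off-diagonal entries constant, entry (2,2) ∈ span{1, x̂}. -/
def memS1 (τ : ℝ → ℝ → Matrix (Fin 2) (Fin 2) ℝ) : Prop :=
  ∃ a₀ a₁ b₀ c₀ e₀ e₁ : ℝ, ∀ x y : ℝ,
    τ x y = !![a₀ + a₁ * y, b₀; c₀, e₀ + e₁ * x]

/-- Membership in the stress space `S²_□`: entry (1,1) ∈ span{1, ŷ},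
off-diagonal entries ∈ span{1, x̂, ŷ}, entry (2,2) ∈ span{1, x̂}. -/
def memS2 (τ : ℝ → ℝ → Matrix (Fin 2) (Fin 2) ℝ) : Prop :=
  ∃ a₀ a₁ b₀ b₁ b₂ c₀ c₁ c₂ e₀ e₁ : ℝ, ∀ x y : ℝ,
    τ x y = !![a₀ + a₁ * y, b₀ + b₁ * x + b₂ * y;
               c₀ + c₁ * x + c₂ * y, e₀ + e₁ * x]

/-- Membership in the stress space `S³_□`: diagonal entries constant,
off-diagonal entries ∈ span{1, x̂, ŷ}. -/
def memS3 (τ : ℝ → ℝ → Matrix (Fin 2) (Fin 2) ℝ) : Prop :=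
  ∃ a₀ b₀ b₁ b₂ c₀ c₁ c₂ e₀ : ℝ, ∀ x y : ℝ,
    τ x y = !![a₀, b₀ + b₁ * x + b₂ * y; c₀ + c₁ * x + c₂ * y, e₀]

/-- The only feature of the stress spaces `Sⁱ_□` that the argument uses. -/
def HasSeparatedDiagonal {α β : Type*} (τ : α → β → Matrix (Fin 2) (Fin 2) ℝ) : Prop :=
  (∀ x x' y, τ x y 0 0 = τ x' y 0 0) ∧ ∀ x y y', τ x y 1 1 = τ x y' 1 1

theorem memS1.hasSeparatedDiagonal {τ : ℝ → ℝ → Matrix (Fin 2) (Fin 2) ℝ} (h : memS1 τ) :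
    HasSeparatedDiagonal τ := by
  obtain ⟨a₀, a₁, b₀, c₀, e₀, e₁, hτ⟩ := h
  exact ⟨fun x x' y => by simp [hτ], fun x y y' => by simp [hτ]⟩

theorem memS2.hasSeparatedDiagonal {τ : ℝ → ℝ → Matrix (Fin 2) (Fin 2) ℝ} (h : memS2 τ) :
    HasSeparatedDiagonal τ := by
  obtain ⟨a₀, a₁, b₀, b₁, b₂, c₀, c₁, c₂, e₀, e₁, hτ⟩ := h
  exact ⟨fun x x' y => by simp [hτ], fun x y y' => by simp [hτ]⟩

theorem memS3.hasSeparatedDiagonal {τ : ℝ → ℝ → Matrix (Fin 2) (Fin 2) ℝ} (h : memS3 τ) :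
    HasSeparatedDiagonal τ := by
  obtain ⟨a₀, b₀, b₁, b₂, c₀, c₁, c₂, e₀, hτ⟩ := h
  exact ⟨fun x x' y => by simp [hτ], fun x y y' => by simp [hτ]⟩

/-- Reading off a diagonal entry of `tr(τ) I = λ⁻¹ (C τ - 2μ τ)`. -/
theorem trace_eq_inv_mul_elasTensor_sub {lam : ℝ} (hlam : lam ≠ 0) (mu : ℝ)
    (τ : Matrix (Fin 2) (Fin 2) ℝ) (i : Fin 2) :
    trace τ = lam⁻¹ * (elasTensor lam mu τ i i - 2 * mu * τ i i) := by
  field_simp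
  simp [elasTensor, mul_comm]

/-- The trace is independent of `x` by the `(1,1)` entry and of `y` by the `(2,2)` entry. -/
theorem trace_eq_of_hasSeparatedDiagonal {α β : Type*} {lam : ℝ} (hlam : lam ≠ 0) {mu : ℝ}
    {τ : α → β → Matrix (Fin 2) (Fin 2) ℝ} (hτ : HasSeparatedDiagonal τ)
    (hC : HasSeparatedDiagonal fun x y => elasTensor lam mu (τ x y)) (x x' : α) (y y' : β) :
    trace (τ x y) = trace (τ x' y') := by
  obtain ⟨hτ₀, hτ₁⟩ := hτ
  obtain ⟨hC₀, hC₁⟩ := hC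
  beta_reduce at hC₀ hC₁
  calc trace (τ x y) = trace (τ x' y) := by
        rw [trace_eq_inv_mul_elasTensor_sub hlam mu _ 0, hτ₀ x x' y, hC₀ x x' y,
          ← trace_eq_inv_mul_elasTensor_sub hlam]
    _ = trace (τ x' y') := by
        rw [trace_eq_inv_mul_elasTensor_sub hlam mu _ 1, hτ₁ x' y y', hC₁ x' y y',
          ← trace_eq_inv_mul_elasTensor_sub hlam]

/-- For each of the stress spaces `Sⁱ_□`, elements of the `C`-compatible
subspace `S^c = {τ ∈ S_□ : C τ ∈ S_□}` have constant trace on `(−1,1)²`. -/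
theorem compatible_subspace_has_constant_trace (lam mu : ℝ) (hlam : lam ≠ 0)
    (τ : ℝ → ℝ → Matrix (Fin 2) (Fin 2) ℝ) :
    (memS1 τ → memS1 (fun x y => elasTensor lam mu (τ x y)) →
      ∃ c : ℝ, ∀ x y : ℝ, x ∈ Set.Ioo (-1 : ℝ) 1 → y ∈ Set.Ioo (-1 : ℝ) 1 →
        Matrix.trace (τ x y) = c) ∧
    (memS2 τ → memS2 (fun x y => elasTensor lam mu (τ x y)) →
      ∃ c : ℝ, ∀ x y : ℝ, x ∈ Set.Ioo (-1 : ℝ) 1 → y ∈ Set.Ioo (-1 : ℝ) 1 →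
        Matrix.trace (τ x y) = c) ∧
    (memS3 τ → memS3 (fun x y => elasTensor lam mu (τ x y)) →
      ∃ c : ℝ, ∀ x y : ℝ, x ∈ Set.Ioo (-1 : ℝ) 1 → y ∈ Set.Ioo (-1 : ℝ) 1 →
        Matrix.trace (τ x y) = c) := by
  have constant_trace : HasSeparatedDiagonal τ →
      HasSeparatedDiagonal (fun x y => elasTensor lam mu (τ x y)) →
      ∃ c : ℝ, ∀ x y : ℝ, x ∈ Set.Ioo (-1 : ℝ) 1 → y ∈ Set.Ioo (-1 : ℝ) 1 →
        Matrix.trace (τ x y) = c :=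
    fun hτ hC => ⟨trace (τ 0 0), fun x y _ _ =>
      trace_eq_of_hasSeparatedDiagonal hlam hτ hC x 0 y 0⟩
  exact ⟨fun hτ hC => constant_trace hτ.hasSeparatedDiagonal hC.hasSeparatedDiagonal,
    fun hτ hC => constant_trace hτ.hasSeparatedDiagonal hC.hasSeparatedDiagonal,
    fun hτ hC => constant_trace hτ.hasSeparatedDiagonal hC.hasSeparatedDiagonal⟩
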